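/- arXiv:1705.03488 — 2 statements merged into one kernel-verified Lean document; each statement's English description precedes it below -/
import Mathlib

section
/- For each integer n ≥ 1 and q with |q| < 1, q^n/(1-q^n) = -1 + 1/(n(1-q)) + (1/n)·∑_{d | n, d > 1} ∑_{r | d} r·μ(d/r)/(1-q^r). -/
/-!
The inner sums are the Möbius transform of `g r = r / (1 - q ^ r)`, so by Möbius inversion their
sum over all divisors `d ∣ n` is `g n = n / (1 - q ^ n)`. The term `d = 1` is `1 / (1 - q)`, and
the claim is this identity rearranged using `q ^ n / (1 - q ^ n) = 1 / (1 - q ^ n) - 1`.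
-/

open Finset ArithmeticFunction
open scoped ArithmeticFunction.Moebius

theorem Nat.sum_divisors_sum_divisors_mul_moebius {R : Type*} [NonAssocRing R] (g : ℕ → R)
    {n : ℕ} (hn : 0 < n) :
    ∑ d ∈ n.divisors, ∑ r ∈ d.divisors, g r * (μ (d / r) : R) = g n := by
  refine sum_eq_iff_sum_mul_moebius_eq.mpr (fun m _ => ?_) n hn
  rw [Nat.sum_divisorsAntidiagonal' fun a b => (μ a : R) * g b]
  exact sum_congr rfl fun r _ => (Int.cast_commute _ _).eq

theorem Nat.sum_divisors_eq_add_sum_filter_one_lt {M : Type*} [AddCommMonoid M] (f : ℕ → M)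
    {n : ℕ} (hn : n ≠ 0) :
    ∑ d ∈ n.divisors, f d = f 1 + ∑ d ∈ n.divisors.filter (fun d => 1 < d), f d := by
  have h_not_one_lt : n.divisors.filter (fun d => ¬1 < d) = {1} := by
    ext d
    simp only [mem_filter, Nat.mem_divisors, mem_singleton, not_lt]
    constructor
    · rintro ⟨⟨hd, -⟩, hd1⟩
      have := Nat.pos_of_dvd_of_pos hd (Nat.pos_of_ne_zero hn)
      omega
    · rintro rfl
      exact ⟨⟨one_dvd n, hn⟩, le_rfl⟩
  rw [← sum_filter_not_add_sum_filter _ (fun d => 1 < d), h_not_one_lt, sum_singleton]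

theorem lambert_term_expansion (n : ℕ) (hn : 1 ≤ n) (q : ℂ) (hq : ‖q‖ < 1) :
    q ^ n / (1 - q ^ n) =
      -1 + 1 / (n * (1 - q)) +
        (1 / (n : ℂ)) *
          ∑ d ∈ n.divisors.filter (fun d => 1 < d),
            ∑ r ∈ d.divisors,
              (r : ℂ) * (ArithmeticFunction.moebius (d / r) : ℂ) / (1 - q ^ r) := by
  have one_sub_pow_ne_zero : ∀ k ≠ 0, 1 - q ^ k ≠ 0 := fun k hk h => by
    have : ‖q ^ k‖ < 1 := by rw [norm_pow]; exact pow_lt_one₀ (norm_nonneg q) hq hk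
    simp [← sub_eq_zero.mp h] at this
  have hn0 : n ≠ 0 := by omega
  have key := Nat.sum_divisors_sum_divisors_mul_moebius (fun r => (r : ℂ) / (1 - q ^ r)) hn
  rw [Nat.sum_divisors_eq_add_sum_filter_one_lt _ hn0] at key
  simp only [Nat.divisors_one, sum_singleton, Nat.div_self one_pos, moebius_apply_one] at key
  simp_rw [mul_div_right_comm _ (μ _ : ℂ)]
  rw [eq_sub_of_add_eq' key]
  have h1 := one_sub_pow_ne_zero 1 one_ne_zero
  have hn1 := one_sub_pow_ne_zero n hn0
  field_simp
  ring
end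

section
/- For fixed complex α and every positive integer x, σ_α(x) = ∑_{d=1}^{x} H_{⌊x/d⌋}^{(1-α)} · d^{α-1} · c_d(x), where c_d(x) is the Ramanujan sum. -/
/-- Generalized harmonic number `H_n^{(r)} = ∑_{k=1}^n k^{-r}` with complex order. -/
noncomputable def genHarmonic (n : ℕ) (r : ℂ) : ℂ :=
  ∑ k ∈ Finset.Icc 1 n, (k : ℂ) ^ (-r)

/-- Ramanujan sum `c_d(x) = ∑_{r | gcd(d,x)} r·μ(d/r)`. -/
def ramanujanSum (d x : ℕ) : ℤ :=
  ∑ r ∈ (Nat.gcd d x).divisors, (r : ℤ) * ArithmeticFunction.moebius (d / r)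

/-!
Both sides are Dirichlet-convolution identities. Writing `c_d(x) = ∑_{r ∣ d, r ∣ x} r μ(d/r)`
exhibits `d ↦ c_d(x)` as `ι_x * μ`, where `ι_x(n) = n` if `n ∣ x` and `0` otherwise, so Möbius
inversion gives `∑_{d ∣ n} c_d(x) = ι_x(n)`. Expanding `H_{⌊x/d⌋}^{(1-α)} = ∑_{k ≤ x/d} k^{α-1}`
turns the right-hand side into `∑_{dk ≤ x} (dk)^{α-1} c_d(x) = ∑_{n ≤ x} n^{α-1} ι_x(n)`, which is
`σ_α(x)`.
-/

open ArithmeticFunction Finset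
open scoped ArithmeticFunction.zeta ArithmeticFunction.Moebius

namespace ArithmeticFunction

theorem pmul_mul_eq_pmul_mul_zeta {R : Type*} [CommSemiring R] (h f : ArithmeticFunction R)
    (h_mul : ∀ m n, h (m * n) = h m * h n) : h.pmul f * h = h.pmul (f * ζ) := by
  ext n
  rw [mul_apply, pmul_apply, coe_mul_zeta_apply, mul_sum,
    ← Nat.sum_divisorsAntidiagonal (fun d _ => h n * f d)]
  refine sum_congr rfl fun p hp => ?_
  rw [pmul_apply, ← (Nat.mem_divisorsAntidiagonal.mp hp).1, h_mul]
  ring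

/-- `n ↦ n ^ s`, except that the value at `0` is `0` even when `s = 0`. -/
noncomputable def cpow (s : ℂ) : ArithmeticFunction ℂ :=
  ⟨fun n => if n = 0 then 0 else (n : ℂ) ^ s, if_pos rfl⟩

theorem cpow_apply {s : ℂ} {n : ℕ} (hn : n ≠ 0) : cpow s n = (n : ℂ) ^ s :=
  if_neg hn

theorem cpow_mul (s : ℂ) (m n : ℕ) : cpow s (m * n) = cpow s m * cpow s n := by
  rcases eq_or_ne m 0 with rfl | hm
  · simp
  rcases eq_or_ne n 0 with rfl | hn
  · simp
  rw [cpow_apply (mul_ne_zero hm hn), cpow_apply hm, cpow_apply hn, Nat.cast_mul,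
    Complex.natCast_mul_natCast_cpow]

def idOnDivisors (x : ℕ) : ArithmeticFunction ℤ :=
  ⟨fun n => if n ∣ x then n else 0, by simp⟩

theorem idOnDivisors_apply (x n : ℕ) : idOnDivisors x n = if n ∣ x then (n : ℤ) else 0 :=
  rfl

end ArithmeticFunction

def ramanujanSumFun (x : ℕ) : ArithmeticFunction ℤ :=
  ⟨fun d => ramanujanSum d x, by simp [ramanujanSum]⟩

theorem ramanujanSumFun_apply (d x : ℕ) : ramanujanSumFun x d = ramanujanSum d x :=
  rfl

theorem ramanujanSumFun_eq_idOnDivisors_mul_moebius (x : ℕ) :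
    ramanujanSumFun x = idOnDivisors x * μ := by
  ext d
  rcases eq_or_ne d 0 with rfl | hd
  · simp
  have h_filter : {r ∈ d.divisors | r ∣ x} = (d.gcd x).divisors := by
    ext r
    simp [Nat.dvd_gcd_iff, hd]
  rw [ramanujanSumFun_apply, ramanujanSum, ← h_filter, sum_filter, mul_apply,
    Nat.sum_divisorsAntidiagonal (fun a b => idOnDivisors x a * μ b)]
  refine sum_congr rfl fun r _ => ?_
  rw [idOnDivisors_apply]
  split_ifs <;> simp

theorem ramanujanSumFun_mul_zeta (x : ℕ) : ramanujanSumFun x * ζ = idOnDivisors x := by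
  rw [ramanujanSumFun_eq_idOnDivisors_mul_moebius, mul_assoc, moebius_mul_coe_zeta, mul_one]

theorem sum_divisors_ramanujanSum (n x : ℕ) :
    ∑ d ∈ n.divisors, ramanujanSum d x = if n ∣ x then (n : ℤ) else 0 := by
  rw [← idOnDivisors_apply, ← ramanujanSumFun_mul_zeta, coe_mul_zeta_apply]
  rfl

theorem sigma_eq_sum_harmonic_ramanujan_general (α : ℂ) (x : ℕ) :
    ∑ d ∈ x.divisors, (d : ℂ) ^ α =
      ∑ d ∈ Finset.Icc 1 x,
        genHarmonic (x / d) (1 - α) * (d : ℂ) ^ (α - 1) * (ramanujanSum d x : ℂ) := by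
  set P := cpow (α - 1)
  have h_Icc : ∀ n, Icc 1 n = Ioc 0 n := fun n => Icc_add_one_left_eq_Ioc 0 n
  have h_harmonic : ∀ n, genHarmonic n (1 - α) = ∑ k ∈ Ioc 0 n, P k := fun n => by
    rw [genHarmonic, h_Icc, neg_sub]
    exact sum_congr rfl fun k hk => (cpow_apply (mem_Ioc.mp hk).1.ne').symm
  rw [Nat.divisors, Ico_add_one_right_eq_Icc, sum_filter, h_Icc]
  calc ∑ n ∈ Ioc 0 x, (if n ∣ x then (n : ℂ) ^ α else 0)
      = ∑ n ∈ Ioc 0 x, P n * ∑ d ∈ n.divisors, (ramanujanSum d x : ℂ) := by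
        refine sum_congr rfl fun n hn => ?_
        have hn_ne : n ≠ 0 := (mem_Ioc.mp hn).1.ne'
        rw [cpow_apply hn_ne, ← Int.cast_sum, sum_divisors_ramanujanSum]
        split_ifs
        · conv_lhs => rw [← sub_add_cancel α 1, Complex.cpow_add _ _ (Nat.cast_ne_zero.mpr hn_ne),
            Complex.cpow_one]
          rw [Int.cast_natCast]
        · simp
    _ = ∑ n ∈ Ioc 0 x, (P.pmul (ramanujanSumFun x : ArithmeticFunction ℂ) * P) n := by
        simp only [pmul_mul_eq_pmul_mul_zeta P _ (cpow_mul _), pmul_apply, coe_mul_zeta_apply,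
          intCoe_apply, ramanujanSumFun_apply]
    _ = _ := by
        rw [sum_Ioc_mul_eq_sum_sum]
        refine sum_congr rfl fun d hd => ?_
        rw [h_harmonic, pmul_apply, intCoe_apply, ramanujanSumFun_apply,
          cpow_apply (mem_Ioc.mp hd).1.ne']
        ring

theorem sigma_eq_sum_harmonic_ramanujan (α : ℂ) (x : ℕ) (hx : 0 < x) :
    ∑ d ∈ x.divisors, (d : ℂ) ^ α =
      ∑ d ∈ Finset.Icc 1 x,
        genHarmonic (x / d) (1 - α) * (d : ℂ) ^ (α - 1) * (ramanujanSum d x : ℂ) :=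
  sigma_eq_sum_harmonic_ramanujan_general α x
end
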